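/- Let p > 2 be a prime and r = 2s−1 with s ≥ 2. In k[X,Y,Z] define Δ = Y^2 − XZ and the homogeneous polynomials f_1 = Δ^{p^{s−1}} + (1/a_0)·( ∑_{t=1}^{s} a_{2t−1} X^{2p^{s−1}−p^{s−t}} Y^{p^{s−t}} + ∑_{t=1}^{s−1} a_{2t} Δ^{p^{s−1−t}} X^{2p^{s−1}−2p^{s−1−t}} ) and f_2 = Y^{p^s} − (1/a_0)·( ∑_{t=1}^{s} b_{2t−1} X^{p^s−p^{s−t}} Y^{p^{s−t}} + ∑_{t=1}^{s−1} b_{2t} Δ^{p^{s−1−t}} X^{p^s−2p^{s−1−t}} ). Then the polynomial f_2^2 − f_1^p + (2b_1/a_0)·X^{p^s−p^{s−1}}·f_1^{(p+1)/2} is divisible by X^{p^s−2p^{s−2}} in k[X,Y,Z]; moreover, the polynomial f_3 = −(a_0/(2b_2))·( f_2^2 − f_1^p + (2b_1/a_0)·X^{p^s−p^{s−1}}·f_1^{(p+1)/2} ) / X^{p^s−2p^{s−2}} satisfies f_3 − Y^{p^s+2p^{s−2}} ∈ (X)k[X,Y,Z]. -/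
import Mathlib


open MvPolynomial

noncomputable section

/-- The polynomial ring `F_p[x_{ij}]`. -/
abbrev RP (p r : ℕ) : Type := MvPolynomial (Fin 2 × Fin r) (ZMod p)

/-- The field `k = F_p({x_{ij}})`. -/
abbrev kk (p r : ℕ) : Type := FractionRing (RP p r)

/-- The polynomial ring `k[X,Y,Z]`; `X 0 = X`, `X 1 = Y`, `X 2 = Z`. -/
abbrev PR (p r : ℕ) : Type := MvPolynomial (Fin 3) (kk p r)

/-- The `(2r+2) × r` matrix `Γ`: its (1-indexed) row `2l+1` is `(x_{11}^{p^l}, …, x_{1r}^{p^l})`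
and its row `2l+2` is `(x_{21}^{p^l}, …, x_{2r}^{p^l})`, for `l = 0, …, r`. -/
def Gmat (p r : ℕ) : Matrix (Fin (2 * r + 2)) (Fin r) (RP p r) :=
  Matrix.of fun i j => X (⟨i.1 % 2, by omega⟩, j) ^ p ^ (i.1 / 2)

/-- The minor `ν_I` of `Γ` on an `r`-element set `I` of rows (rows taken in increasing
order); junk value `0` if `I` does not have exactly `r` elements. -/
def nuG (p r : ℕ) (I : Finset (Fin (2 * r + 2))) : RP p r :=
  if h : I.card = r then
    Matrix.det (Matrix.of fun a b => Gmat p r ((I.orderIsoOfFin h a : Fin (2 * r + 2))) b)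
  else 0

/-- `a_m = ν_{{1,…,r+1}\{r+1−m}}` (so `a_0 = ν_{1,…,r}`), viewed in `k`. -/
def aC (p r m : ℕ) : kk p r :=
  algebraMap (RP p r) (kk p r)
    (nuG p r (Finset.univ.filter fun i => i.1 + 1 ≤ r + 1 ∧ i.1 + 1 ≠ r + 1 - m))

/-- `b_m = ν_{({1,…,r}\{r+1−m})∪{r+2}}`, viewed in `k`. -/
def bC (p r m : ℕ) : kk p r :=
  algebraMap (RP p r) (kk p r)
    (nuG p r (Finset.univ.filter fun i =>
      (i.1 + 1 ≤ r ∧ i.1 + 1 ≠ r + 1 - m) ∨ i.1 + 1 = r + 2))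

lemma binom_aux {R : Type*} [CommRing R] (x y : R) (n : ℕ) :
    ∃ v, (x + y) ^ n = x ^ n + y * v := by
  induction n with
  | zero => exact ⟨0, by ring⟩
  | succ n ih =>
    obtain ⟨v, hv⟩ := ih
    exact ⟨x * v + x ^ n + y * v, by rw [pow_succ, hv]; ring⟩

lemma binom_aux' {R : Type*} [CommRing R] (x y : R) (n : ℕ) :
    ∃ v, (x - y) ^ n = x ^ n - y * v := by
  obtain ⟨v, hv⟩ := binom_aux x (-y) n
  exact ⟨v, by rw [sub_eq_add_neg, hv]; ring⟩

lemma det_Gmat_ne_zero (p r : ℕ) [Fact p.Prime] (g : Fin r → Fin (2 * r + 2))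
    (hg : Function.Injective g) :
    Matrix.det (Matrix.of fun a b => Gmat p r (g a) b) ≠ 0 := by
  classical
  have hp : p.Prime := Fact.out
  set v : Equiv.Perm (Fin r) → Fin r → Fin 2 × Fin r :=
    fun σ i => (⟨(g (σ i)).1 % 2, by omega⟩, i) with hv
  set E : Equiv.Perm (Fin r) → Fin r → ℕ := fun σ i => p ^ ((g (σ i)).1 / 2) with hE
  set D : Equiv.Perm (Fin r) → (Fin 2 × Fin r →₀ ℕ) :=
    fun σ => ∑ i, Finsupp.single (v σ i) (E σ i) with hD
  have hprod : ∀ σ : Equiv.Perm (Fin r),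
      (∏ i, (Matrix.of fun a b => Gmat p r (g a) b) (σ i) i)
        = monomial (D σ) (1 : ZMod p) := by
    intro σ
    have : ∀ i, (Matrix.of fun a b => Gmat p r (g a) b) (σ i) i
        = X (v σ i) ^ E σ i := fun i => rfl
    simp_rw [this, X_pow_eq_monomial]
    rw [hD, ← monomial_sum_one]
  have key : ∀ σ τ : Equiv.Perm (Fin r), ∀ i,
      D σ (v τ i) = if v σ i = v τ i then E σ i else 0 := by
    intro σ τ i
    rw [hD]
    rw [Finsupp.finset_sum_apply]
    rw [Finset.sum_eq_single i]
    · rw [Finsupp.single_apply]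
    · intro j _ hj
      rw [Finsupp.single_apply, if_neg]
      intro hc
      exact hj (congrArg Prod.snd hc)
    · simp
  have hDinj : ∀ σ τ : Equiv.Perm (Fin r), D σ = D τ → σ = τ := by
    intro σ τ h
    refine Equiv.ext fun i => ?_
    have h2 : D τ (v τ i) = E τ i := by rw [key]; simp
    have h3 : (if v σ i = v τ i then E σ i else 0) = E τ i := by
      rw [← key, h, h2]
    have hEpos : 0 < E τ i := pow_pos hp.pos _
    by_cases hvv : v σ i = v τ i
    · rw [if_pos hvv] at h3
      have hmod : (g (σ i)).1 % 2 = (g (τ i)).1 % 2 := congrArg (fun w => w.1.1) hvv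
      have hdiv : (g (σ i)).1 / 2 = (g (τ i)).1 / 2 :=
        Nat.pow_right_injective hp.two_le h3
      have : g (σ i) = g (τ i) := Fin.ext (by omega)
      exact hg this
    · rw [if_neg hvv] at h3
      omega
  intro h0
  have hdet : Matrix.det (Matrix.of fun a b => Gmat p r (g a) b)
      = ∑ σ : Equiv.Perm (Fin r),
          C (((Equiv.Perm.sign σ : ℤ) : ZMod p)) * monomial (D σ) 1 := by
    rw [Matrix.det_apply']
    refine Finset.sum_congr rfl fun σ _ => ?_
    rw [hprod σ]
    congr 1
  have hc := congrArg (MvPolynomial.coeff (D 1)) h0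
  rw [hdet, coeff_sum, coeff_zero] at hc
  rw [Finset.sum_eq_single (1 : Equiv.Perm (Fin r))] at hc
  · simp at hc
  · intro σ _ hσ
    rw [coeff_C_mul, coeff_monomial, if_neg, mul_zero]
    intro h; exact hσ (hDinj _ _ h)
  · simp

lemma nuG_ne_zero (p r : ℕ) [Fact p.Prime] (I : Finset (Fin (2 * r + 2)))
    (h : I.card = r) : nuG p r I ≠ 0 := by
  rw [nuG, dif_pos h]
  exact det_Gmat_ne_zero p r _
    (Subtype.coe_injective.comp (I.orderIsoOfFin h).injective)

lemma card_filter_fin (N : ℕ) (S : Finset ℕ) (hS : ∀ x ∈ S, x < N) :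
    ((Finset.univ : Finset (Fin N)).filter (fun i => i.1 ∈ S)).card = S.card := by
  classical
  apply Finset.card_bij (fun (a : Fin N) _ => a.1)
  · intro a ha; exact (Finset.mem_filter.1 ha).2
  · intro a _ b _ hab; exact Fin.ext hab
  · intro b hb
    exact ⟨⟨b, hS b hb⟩, Finset.mem_filter.2 ⟨Finset.mem_univ _, hb⟩, rfl⟩

lemma aC0_ne_zero (p r : ℕ) [Fact p.Prime] (hr : 1 ≤ r) : aC p r 0 ≠ 0 := by
  have hcard : ((Finset.univ : Finset (Fin (2 * r + 2))).filter
      fun i => i.1 + 1 ≤ r + 1 ∧ i.1 + 1 ≠ r + 1 - 0).card = r := by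
    rw [Finset.filter_congr (q := fun i => i.1 ∈ Finset.range r)
      (fun x _ => by simp [Finset.mem_range]; omega)]
    rw [card_filter_fin _ _ (fun x hx => by simp [Finset.mem_range] at hx; omega)]
    exact Finset.card_range r
  rw [aC]
  intro h0
  exact nuG_ne_zero p r _ hcard
    (IsFractionRing.injective (RP p r) (kk p r) (h0.trans (map_zero _).symm))

lemma bC2_ne_zero (p r : ℕ) [Fact p.Prime] (hr : 3 ≤ r) : bC p r 2 ≠ 0 := by
  have hcard : ((Finset.univ : Finset (Fin (2 * r + 2))).filter
      fun i => (i.1 + 1 ≤ r ∧ i.1 + 1 ≠ r + 1 - 2) ∨ i.1 + 1 = r + 2).card = r := by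
    rw [Finset.filter_congr (q := fun i => i.1 ∈ insert (r + 1) ((Finset.range r).erase (r - 2)))
      (fun x _ => by
        simp [Finset.mem_range, Finset.mem_insert, Finset.mem_erase]
        omega)]
    rw [card_filter_fin _ _ (fun x hx => by
      simp [Finset.mem_range, Finset.mem_insert, Finset.mem_erase] at hx; omega)]
    rw [Finset.card_insert_of_notMem (by simp [Finset.mem_erase, Finset.mem_range])]
    rw [Finset.card_erase_of_mem (by simp [Finset.mem_range]; omega)]
    rw [Finset.card_range]
    omega
  rw [bC]
  intro h0
  exact nuG_ne_zero p r _ hcard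
    (IsFractionRing.injective (RP p r) (kk p r) (h0.trans (map_zero _).symm))

set_option maxHeartbeats 2000000 in
/-- construction of `f_3` from `f_1` and `f_2` when `r = 2s−1` is odd. -/
theorem construction_f3_odd (p s : ℕ) [Fact p.Prime] (hp2 : 2 < p) (hs : 2 ≤ s) :
    let Δ : PR p (2 * s - 1) := X 1 ^ 2 - X 0 * X 2
    let f1 : PR p (2 * s - 1) :=
      Δ ^ p ^ (s - 1) + C (aC p (2 * s - 1) 0)⁻¹ *
        ((∑ t ∈ Finset.Icc 1 s, C (aC p (2 * s - 1) (2 * t - 1)) *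
            X 0 ^ (2 * p ^ (s - 1) - p ^ (s - t)) * X 1 ^ p ^ (s - t)) +
         (∑ t ∈ Finset.Icc 1 (s - 1), C (aC p (2 * s - 1) (2 * t)) *
            Δ ^ p ^ (s - 1 - t) * X 0 ^ (2 * p ^ (s - 1) - 2 * p ^ (s - 1 - t))))
    let f2 : PR p (2 * s - 1) :=
      X 1 ^ p ^ s - C (aC p (2 * s - 1) 0)⁻¹ *
        ((∑ t ∈ Finset.Icc 1 s, C (bC p (2 * s - 1) (2 * t - 1)) *
            X 0 ^ (p ^ s - p ^ (s - t)) * X 1 ^ p ^ (s - t)) +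
         (∑ t ∈ Finset.Icc 1 (s - 1), C (bC p (2 * s - 1) (2 * t)) *
            Δ ^ p ^ (s - 1 - t) * X 0 ^ (p ^ s - 2 * p ^ (s - 1 - t))))
    ∃ h : PR p (2 * s - 1),
      f2 ^ 2 - f1 ^ p
          + C (2 * bC p (2 * s - 1) 1 / aC p (2 * s - 1) 0) *
              X 0 ^ (p ^ s - p ^ (s - 1)) * f1 ^ ((p + 1) / 2)
        = X 0 ^ (p ^ s - 2 * p ^ (s - 2)) * h ∧
      C (-(aC p (2 * s - 1) 0 / (2 * bC p (2 * s - 1) 2))) * h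
          - X 1 ^ (p ^ s + 2 * p ^ (s - 2)) ∈ Ideal.span {(X 0 : PR p (2 * s - 1))} := by
  intro Δ f1 f2
  have hp : p.Prime := Fact.out
  have hp1 : 1 < p := hp.one_lt
  have hΔ : Δ = (X 1 : PR p (2 * s - 1)) ^ 2 - X 0 * X 2 := rfl
  have hf1 : f1 = Δ ^ p ^ (s - 1) + C (aC p (2 * s - 1) 0)⁻¹ *
      ((∑ t ∈ Finset.Icc 1 s, C (aC p (2 * s - 1) (2 * t - 1)) *
          X 0 ^ (2 * p ^ (s - 1) - p ^ (s - t)) * X 1 ^ p ^ (s - t)) +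
       (∑ t ∈ Finset.Icc 1 (s - 1), C (aC p (2 * s - 1) (2 * t)) *
          Δ ^ p ^ (s - 1 - t) * X 0 ^ (2 * p ^ (s - 1) - 2 * p ^ (s - 1 - t)))) := rfl
  have hf2 : f2 = X 1 ^ p ^ s - C (aC p (2 * s - 1) 0)⁻¹ *
      ((∑ t ∈ Finset.Icc 1 s, C (bC p (2 * s - 1) (2 * t - 1)) *
          X 0 ^ (p ^ s - p ^ (s - t)) * X 1 ^ p ^ (s - t)) +
       (∑ t ∈ Finset.Icc 1 (s - 1), C (bC p (2 * s - 1) (2 * t)) *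
          Δ ^ p ^ (s - 1 - t) * X 0 ^ (p ^ s - 2 * p ^ (s - 1 - t)))) := rfl
  clear_value Δ f1 f2
  haveI hchkk : CharP (kk p (2 * s - 1)) p :=
    charP_of_injective_algebraMap
      (IsFractionRing.injective (RP p (2 * s - 1)) (kk p (2 * s - 1))) p
  set q := p ^ (s - 1) with hq
  set e := p ^ (s - 2) with he
  set PP := p ^ s with hPP
  set m := (p + 1) / 2 with hm
  set N := PP - 2 * e with hN
  have he1 : 1 ≤ e := by rw [he]; exact Nat.one_le_pow _ _ (by omega)
  have hqe : q = e * p := by rw [hq, he, ← pow_succ]; congr 1; omega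
  have hPq : PP = q * p := by rw [hPP, hq, ← pow_succ]; congr 1; omega
  have h3e : 3 * e ≤ q := by nlinarith
  have h3q : 3 * q ≤ PP := by nlinarith [he1, h3e]
  have h2m : 2 * m = p + 1 := by
    rw [hm]; rcases hp.eq_two_or_odd with h | h <;> omega
  have h2qm : 2 * q * m = PP + q := by
    calc 2 * q * m = q * (2 * m) := by ring
    _ = q * (p + 1) := by rw [h2m]
    _ = q * p + q := by ring
    _ = PP + q := by rw [hPq]
  -- factor X^q out of the tail of f1
  obtain ⟨A2, hA⟩ : ∃ A2, f1 = Δ ^ q + (X 0 : PR p (2 * s - 1)) ^ q * A2 := by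
    refine ⟨C (aC p (2 * s - 1) 0)⁻¹ *
      ((∑ t ∈ Finset.Icc 1 s, C (aC p (2 * s - 1) (2 * t - 1)) *
          X 0 ^ (q - p ^ (s - t)) * X 1 ^ p ^ (s - t)) +
       (∑ t ∈ Finset.Icc 1 (s - 1), C (aC p (2 * s - 1) (2 * t)) *
          Δ ^ p ^ (s - 1 - t) * X 0 ^ (q - 2 * p ^ (s - 1 - t)))), ?_⟩
    rw [hf1]
    have h1 : (∑ t ∈ Finset.Icc 1 s, C (aC p (2 * s - 1) (2 * t - 1)) *
          X 0 ^ (2 * q - p ^ (s - t)) * X 1 ^ p ^ (s - t))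
        = (X 0 : PR p (2 * s - 1)) ^ q * ∑ t ∈ Finset.Icc 1 s,
            C (aC p (2 * s - 1) (2 * t - 1)) * X 0 ^ (q - p ^ (s - t)) * X 1 ^ p ^ (s - t) := by
      rw [Finset.mul_sum]
      refine Finset.sum_congr rfl fun t ht => ?_
      rw [Finset.mem_Icc] at ht
      have hle : p ^ (s - t) ≤ q := by
        rw [hq]; exact Nat.pow_le_pow_right (by omega) (by omega)
      rw [show 2 * q - p ^ (s - t) = q + (q - p ^ (s - t)) by omega, pow_add]
      ring
    have h2 : (∑ t ∈ Finset.Icc 1 (s - 1), C (aC p (2 * s - 1) (2 * t)) *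
          Δ ^ p ^ (s - 1 - t) * X 0 ^ (2 * q - 2 * p ^ (s - 1 - t)))
        = (X 0 : PR p (2 * s - 1)) ^ q * ∑ t ∈ Finset.Icc 1 (s - 1),
            C (aC p (2 * s - 1) (2 * t)) * Δ ^ p ^ (s - 1 - t) * X 0 ^ (q - 2 * p ^ (s - 1 - t)) := by
      rw [Finset.mul_sum]
      refine Finset.sum_congr rfl fun t ht => ?_
      rw [Finset.mem_Icc] at ht
      have hle : 2 * p ^ (s - 1 - t) ≤ q := by
        have : p ^ (s - 1 - t) ≤ e := by
          rw [he]; exact Nat.pow_le_pow_right (by omega) (by omega)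
        omega
      rw [show 2 * q - 2 * p ^ (s - 1 - t) = q + (q - 2 * p ^ (s - 1 - t)) by omega, pow_add]
      ring
    rw [h1, h2]
    ring
  -- Frobenius identities
  have hΔq : Δ ^ q = (X 1 : PR p (2 * s - 1)) ^ (2 * q) - X 0 ^ q * X 2 ^ q := by
    rw [hΔ, hq, sub_pow_char_pow, ← pow_mul, mul_pow]
  have hΔPP : Δ ^ PP = (X 1 : PR p (2 * s - 1)) ^ (2 * PP) - X 0 ^ PP * X 2 ^ PP := by
    rw [hΔ, hPP, sub_pow_char_pow, ← pow_mul, mul_pow]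
  have hf1p : f1 ^ p = (X 1 : PR p (2 * s - 1)) ^ (2 * PP) - X 0 ^ PP * X 2 ^ PP
      + X 0 ^ PP * A2 ^ p := by
    rw [hA, add_pow_char, mul_pow, ← pow_mul, ← pow_mul, ← hPq, hΔPP]
  obtain ⟨V, hV⟩ := binom_aux (Δ ^ q) ((X 0 : PR p (2 * s - 1)) ^ q * A2) m
  obtain ⟨V2, hV2⟩ := binom_aux' ((X 1 : PR p (2 * s - 1)) ^ (2 * q)) (X 0 ^ q * X 2 ^ q) m
  have hΔqm : (Δ ^ q) ^ m = (X 1 : PR p (2 * s - 1)) ^ (PP + q) - X 0 ^ q * (X 2 ^ q * V2) := by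
    rw [hΔq, hV2, ← pow_mul, show 2 * q * m = PP + q from h2qm]
    ring
  have hf1m : f1 ^ m = (X 1 : PR p (2 * s - 1)) ^ (PP + q) - X 0 ^ q * (X 2 ^ q * V2)
      + X 0 ^ q * (A2 * V) := by
    rw [hA, hV, hΔqm]
    ring
  -- decomposition of the tail of f2
  obtain ⟨W, hW⟩ : ∃ W, (∑ t ∈ Finset.Icc 1 s, C (bC p (2 * s - 1) (2 * t - 1)) *
        X 0 ^ (PP - p ^ (s - t)) * X 1 ^ p ^ (s - t)) +
      (∑ t ∈ Finset.Icc 1 (s - 1), C (bC p (2 * s - 1) (2 * t)) *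
        Δ ^ p ^ (s - 1 - t) * X 0 ^ (PP - 2 * p ^ (s - 1 - t)))
      = C (bC p (2 * s - 1) 1) * X 0 ^ (PP - q) * X 1 ^ q
        + C (bC p (2 * s - 1) 2) * Δ ^ e * X 0 ^ N + X 0 ^ (N + 1) * W := by
    refine ⟨(∑ t ∈ Finset.Icc 2 s, C (bC p (2 * s - 1) (2 * t - 1)) *
        X 0 ^ (PP - p ^ (s - t) - (N + 1)) * X 1 ^ p ^ (s - t)) +
      (∑ t ∈ Finset.Icc 2 (s - 1), C (bC p (2 * s - 1) (2 * t)) *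
        Δ ^ p ^ (s - 1 - t) * X 0 ^ (PP - 2 * p ^ (s - 1 - t) - (N + 1))), ?_⟩
    have hins : Finset.Icc 1 s = insert 1 (Finset.Icc 2 s) := by
      ext x; simp only [Finset.mem_Icc, Finset.mem_insert]; omega
    have hins' : Finset.Icc 1 (s - 1) = insert 1 (Finset.Icc 2 (s - 1)) := by
      ext x; simp only [Finset.mem_Icc, Finset.mem_insert]; omega
    have hs1 : (∑ t ∈ Finset.Icc 2 s, C (bC p (2 * s - 1) (2 * t - 1)) *
          X 0 ^ (PP - p ^ (s - t)) * X 1 ^ p ^ (s - t))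
        = (X 0 : PR p (2 * s - 1)) ^ (N + 1) * ∑ t ∈ Finset.Icc 2 s,
            C (bC p (2 * s - 1) (2 * t - 1)) * X 0 ^ (PP - p ^ (s - t) - (N + 1)) *
              X 1 ^ p ^ (s - t) := by
      rw [Finset.mul_sum]
      refine Finset.sum_congr rfl fun t ht => ?_
      rw [Finset.mem_Icc] at ht
      have hle : p ^ (s - t) ≤ e := by
        rw [he]; exact Nat.pow_le_pow_right (by omega) (by omega)
      have hx : (X 0 : PR p (2 * s - 1)) ^ (PP - p ^ (s - t))
          = X 0 ^ (N + 1) * X 0 ^ (PP - p ^ (s - t) - (N + 1)) := by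
        rw [← pow_add]; congr 1; omega
      rw [hx]; ring
    have hs2 : (∑ t ∈ Finset.Icc 2 (s - 1), C (bC p (2 * s - 1) (2 * t)) *
          Δ ^ p ^ (s - 1 - t) * X 0 ^ (PP - 2 * p ^ (s - 1 - t)))
        = (X 0 : PR p (2 * s - 1)) ^ (N + 1) * ∑ t ∈ Finset.Icc 2 (s - 1),
            C (bC p (2 * s - 1) (2 * t)) * Δ ^ p ^ (s - 1 - t) *
              X 0 ^ (PP - 2 * p ^ (s - 1 - t) - (N + 1)) := by
      rw [Finset.mul_sum]
      refine Finset.sum_congr rfl fun t ht => ?_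
      rw [Finset.mem_Icc] at ht
      have hlt : p ^ (s - 1 - t) < e := by
        rw [he]; exact Nat.pow_lt_pow_right hp1 (by omega)
      have hx : (X 0 : PR p (2 * s - 1)) ^ (PP - 2 * p ^ (s - 1 - t))
          = X 0 ^ (N + 1) * X 0 ^ (PP - 2 * p ^ (s - 1 - t) - (N + 1)) := by
        rw [← pow_add]; congr 1; omega
      rw [hx]; ring
    rw [hins, hins', Finset.sum_insert (by simp), Finset.sum_insert (by simp), hs1, hs2]
    norm_num
    rw [show s - 1 - 1 = s - 2 by omega, ← hq, ← he, ← hN]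
    ring
  -- the factored form of the tail of f2
  set B3 : PR p (2 * s - 1) := C (bC p (2 * s - 1) 1) * X 1 ^ q
      + C (bC p (2 * s - 1) 2) * Δ ^ e * X 0 ^ (q - 2 * e)
      + X 0 ^ (q - 2 * e + 1) * W with hB3
  -- exponent identities
  have E1 : (X 0 : PR p (2 * s - 1)) ^ (PP - q) * X 0 ^ (q - 2 * e) = X 0 ^ N := by
    rw [← pow_add]; congr 1; omega
  have E2 : (X 0 : PR p (2 * s - 1)) ^ (PP - q) * X 0 ^ (q - 2 * e + 1) = X 0 ^ N * X 0 := by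
    rw [← pow_succ, ← pow_add]; congr 1; omega
  have E3 : (X 0 : PR p (2 * s - 1)) ^ (PP - q) * X 0 ^ (PP - q)
      = X 0 ^ N * X 0 * X 0 ^ (2 * (PP - q) - (N + 1)) := by
    rw [← pow_succ, ← pow_add, ← pow_add]; congr 1; omega
  have E4 : (X 0 : PR p (2 * s - 1)) ^ PP = X 0 ^ N * X 0 * X 0 ^ (2 * e - 1) := by
    rw [← pow_succ, ← pow_add]; congr 1; omega
  have E5 : (X 0 : PR p (2 * s - 1)) ^ (PP - q) * X 0 ^ q
      = X 0 ^ N * X 0 * X 0 ^ (2 * e - 1) := by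
    rw [← pow_succ, ← pow_add, ← pow_add]; congr 1; omega
  have hf2' : f2 = X 1 ^ PP - C (aC p (2 * s - 1) 0)⁻¹ * (X 0 ^ (PP - q) * B3) := by
    rw [hf2, hW, hB3]
    have h1 : (X 0 : PR p (2 * s - 1)) ^ (PP - q) * X 0 ^ (q - 2 * e + 1) = X 0 ^ (N + 1) := by
      rw [← pow_add]; congr 1; omega
    linear_combination (C (aC p (2 * s - 1) 0)⁻¹ * C (bC p (2 * s - 1) 2) * Δ ^ e) * E1
      + (C (aC p (2 * s - 1) 0)⁻¹ * W) * h1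
  have hcoef : (C (2 * bC p (2 * s - 1) 1 / aC p (2 * s - 1) 0) : PR p (2 * s - 1))
      = 2 * C (bC p (2 * s - 1) 1) * C (aC p (2 * s - 1) 0)⁻¹ := by
    rw [div_eq_mul_inv, map_mul, map_mul, map_ofNat]
  set J : PR p (2 * s - 1) :=
    -(2 * C (aC p (2 * s - 1) 0)⁻¹ * X 1 ^ PP * W)
      + (C (aC p (2 * s - 1) 0)⁻¹) ^ 2 * X 0 ^ (2 * (PP - q) - (N + 1)) * B3 ^ 2
      + X 0 ^ (2 * e - 1) * (X 2 ^ PP - A2 ^ p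
          + 2 * C (bC p (2 * s - 1) 1) * C (aC p (2 * s - 1) 0)⁻¹
            * (A2 * V - X 2 ^ q * V2)) with hJ
  refine ⟨-(2 * C (aC p (2 * s - 1) 0)⁻¹ * C (bC p (2 * s - 1) 2) * X 1 ^ PP * Δ ^ e)
      + X 0 * J, ?_, ?_⟩
  · rw [hcoef, hf2', hf1p, hf1m, hJ]
    linear_combination
      (-(2 * C (aC p (2 * s - 1) 0)⁻¹ * X 1 ^ PP * X 0 ^ (PP - q))) * hB3
      + (-(2 * C (aC p (2 * s - 1) 0)⁻¹ * C (bC p (2 * s - 1) 2) * Δ ^ e * X 1 ^ PP)) * E1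
      + (-(2 * C (aC p (2 * s - 1) 0)⁻¹ * X 1 ^ PP * W)) * E2
      + ((C (aC p (2 * s - 1) 0)⁻¹) ^ 2 * B3 ^ 2) * E3
      + (X 2 ^ PP - A2 ^ p) * E4
      + (2 * C (bC p (2 * s - 1) 1) * C (aC p (2 * s - 1) 0)⁻¹ * (A2 * V - X 2 ^ q * V2)) * E5
  · -- membership in (X 0)
    obtain ⟨V3, hV3⟩ := binom_aux' ((X 1 : PR p (2 * s - 1)) ^ 2) (X 0 * X 2) e
    have hΔe : Δ ^ e = (X 1 : PR p (2 * s - 1)) ^ (2 * e) - X 0 * (X 2 * V3) := by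
      rw [hΔ, hV3, ← pow_mul]
      ring
    have ha0 : aC p (2 * s - 1) 0 ≠ 0 := aC0_ne_zero p (2 * s - 1) (by omega)
    have hb2 : bC p (2 * s - 1) 2 ≠ 0 := bC2_ne_zero p (2 * s - 1) (by omega)
    have h2k : (2 : kk p (2 * s - 1)) ≠ 0 := by
      intro h0
      have h0' : ((2 : ℕ) : kk p (2 * s - 1)) = 0 := by exact_mod_cast h0
      rw [CharP.cast_eq_zero_iff (kk p (2 * s - 1)) p 2] at h0'
      have := Nat.le_of_dvd (by norm_num) h0'
      omega
    have hfield : (-(aC p (2 * s - 1) 0 / (2 * bC p (2 * s - 1) 2)))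
        * -(2 * (aC p (2 * s - 1) 0)⁻¹ * bC p (2 * s - 1) 2) = 1 := by
      field_simp
    have hone : (C (-(aC p (2 * s - 1) 0 / (2 * bC p (2 * s - 1) 2))) : PR p (2 * s - 1))
        * -(2 * C (aC p (2 * s - 1) 0)⁻¹ * C (bC p (2 * s - 1) 2)) = 1 := by
      rw [show ((2 : PR p (2 * s - 1))) = C (2 : kk p (2 * s - 1)) from (map_ofNat C 2).symm,
        ← map_mul, ← map_mul, ← map_neg, ← map_mul, hfield, map_one]
    rw [Ideal.mem_span_singleton]
    refine ⟨C (-(aC p (2 * s - 1) 0 / (2 * bC p (2 * s - 1) 2))) * J - X 1 ^ PP * (X 2 * V3), ?_⟩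
    linear_combination (X 1 ^ PP * Δ ^ e) * hone + (X 1 ^ PP) * hΔe


end
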